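/- Let a = 16a' where a' is a positive squarefree integer not divisible by 2 or 3. Then for every prime number q and every prime 𝔮 of K = ℚ(√-3) lying above q, either a is not a square in the completion K_𝔮, or the 𝔮-adic valuation of 4a is congruent to 0 modulo 6. In particular the set S_a := { 𝔮 : a ∈ (K_𝔮^*)^2 and v_𝔮(4a) ≢ 0 mod 6 } is empty. -/

import Mathlib

open IsDedekindDomain NumberField Multiplicative Polynomial

private lemma wz_ofAdd_inj {m n : ℤ}
    (h : ((Multiplicative.ofAdd m : Multiplicative ℤ) : WithZero (Multiplicative ℤ))
      = ((Multiplicative.ofAdd n : Multiplicative ℤ) : WithZero (Multiplicative ℤ))) : m = n := by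
  have := WithZero.coe_inj.mp h
  simpa using this

/-- Extract an integer exponent from a nonzero element of `ℤₘ₀`. -/
private lemma wz_exp {z : WithZero (Multiplicative ℤ)} (hz : z ≠ 0) :
    ∃ m : ℤ, z = ((Multiplicative.ofAdd m : Multiplicative ℤ) : WithZero (Multiplicative ℤ)) := by
  obtain ⟨u, hu⟩ := WithZero.ne_zero_iff_exists.mp hz
  exact ⟨Multiplicative.toAdd u, by rw [← hu, ofAdd_toAdd]⟩

/-- If an integer is not in (the pullback of) `v`, its valuation is `1`. -/
private lemma val_int_eq_one {K : Type*} [Field K] [NumberField K]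
    (v : HeightOneSpectrum (𝓞 K)) {n : ℤ} (h : (n : 𝓞 K) ∉ v.asIdeal) :
    v.valuation K ((n : ℤ) : K) = 1 := by
  rw [show ((n : ℤ) : K) = algebraMap (𝓞 K) K ((n : 𝓞 K)) by rw [map_intCast]]
  rw [IsDedekindDomain.HeightOneSpectrum.valuation_of_algebraMap]
  refine le_antisymm (v.intValuation_le_one _) ?_
  by_contra hlt
  rw [not_le] at hlt
  change v.intValuation _ < 1 at hlt
  rw [IsDedekindDomain.HeightOneSpectrum.intValuation_lt_one_iff_dvd,
    Ideal.dvd_span_singleton] at hlt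
  exact h hlt

private lemma val_int_lt_one {K : Type*} [Field K] [NumberField K]
    (v : HeightOneSpectrum (𝓞 K)) {n : ℤ} (h : (n : 𝓞 K) ∈ v.asIdeal) :
    v.valuation K ((n : ℤ) : K) < 1 := by
  rw [show ((n : ℤ) : K) = algebraMap (𝓞 K) K ((n : 𝓞 K)) by rw [map_intCast]]
  rw [IsDedekindDomain.HeightOneSpectrum.valuation_of_algebraMap]
  change v.intValuation _ < 1
  rw [IsDedekindDomain.HeightOneSpectrum.intValuation_lt_one_iff_dvd,
    Ideal.dvd_span_singleton]
  exact h

/-- Let `K = ℚ(√-3)` and `a = 16a'` with `a'` a positive squarefree integer coprime to `6`.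
Then for every finite place `𝔮` of `K`, either `a` is not a square in the completion `K_𝔮`,
or `v_𝔮(4a) ≡ 0 (mod 6)`; in particular the set `S_a` is empty. -/
theorem Sa_empty (K : Type*) [Field K] [NumberField K]
    (s : K) (hs : s ^ 2 = -3) (hgen : Algebra.adjoin ℚ {s} = ⊤)
    (a' : ℤ) (hpos : 0 < a') (hsf : Squarefree a') (h2 : ¬ (2 ∣ a')) (h3 : ¬ (3 ∣ a'))
    (a : ℤ) (ha : a = 16 * a') :
    ∀ v : HeightOneSpectrum (𝓞 K),
      ¬ (∃ b : v.adicCompletion K, b ^ 2 = (algebraMap K (v.adicCompletion K)) (a : K)) ∨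
      (∃ n : ℤ, v.valuation K ((4 * a : ℤ) : K)
          = (Multiplicative.ofAdd (6 * n) : Multiplicative ℤ)) := by
  subst ha
  intro v
  by_cases hmem : (a' : 𝓞 K) ∈ v.asIdeal
  · -- `a'` is divisible by `v`; then `a` is not a square in the completion.
    left
    rintro ⟨b, hb⟩
    -- the prime `q` below `v`
    set P := Ideal.comap (algebraMap ℤ (𝓞 K)) v.asIdeal with hPdef
    haveI : P.IsPrime := Ideal.IsPrime.comap _
    have hmap : ∀ n : ℤ, n ∈ P ↔ (n : 𝓞 K) ∈ v.asIdeal := by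
      intro n
      rw [hPdef, Ideal.mem_comap, algebraMap_int_eq, eq_intCast]
    have ha'P : a' ∈ P := (hmap a').mpr hmem
    have hPne : P ≠ ⊥ := by
      intro h
      rw [h, Ideal.mem_bot] at ha'P
      exact hpos.ne' ha'P
    set q := Submodule.IsPrincipal.generator P with hqdef
    have hq : Prime q := Submodule.IsPrincipal.prime_generator_of_isPrime P hPne
    have hmemq : ∀ n : ℤ, n ∈ P ↔ q ∣ n := by
      intro n
      conv_lhs => rw [← Submodule.IsPrincipal.span_singleton_generator P]
      exact Ideal.mem_span_singleton
    -- valuation of integers prime to q is 1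
    have hval1 : ∀ n : ℤ, ¬ q ∣ n → v.valuation K ((n : ℤ) : K) = 1 := by
      intro n hn
      exact val_int_eq_one v (fun h => hn ((hmemq n).mp ((hmap n).mpr h)))
    have hqa' : q ∣ a' := (hmemq a').mp ha'P
    have hq2 : ¬ q ∣ 2 := by
      intro h
      rcases Int.associated_iff.mp (hq.associated_of_dvd Int.prime_two h) with h' | h'
      · exact h2 (h' ▸ hqa')
      · exact h2 (neg_dvd.mp (h' ▸ hqa'))
    have hq3 : ¬ q ∣ 3 := by
      intro h
      rcases Int.associated_iff.mp (hq.associated_of_dvd Int.prime_three h) with h' | h'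
      · exact h3 (h' ▸ hqa')
      · exact h3 (neg_dvd.mp (h' ▸ hqa'))
    -- apply the valuation to hb
    have hvb : (Valued.v b) ^ 2 = v.valuation K ((a' : ℤ) : K) := by
      have h1 : Valued.v (b ^ 2) = (Valued.v b) ^ 2 := by
        rw [Valuation.map_pow]
      have h2' : Valued.v ((algebraMap K (v.adicCompletion K)) (((16 * a' : ℤ) : K)))
          = v.valuation K (((16 * a' : ℤ) : K)) :=
        IsDedekindDomain.HeightOneSpectrum.valuedAdicCompletion_eq_valuation' v _
      have h16 : v.valuation K ((16 : ℤ) : K) = 1 := by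
        refine hval1 16 (fun h => hq2 ?_)
        have : q ∣ (2 : ℤ) ^ 4 := by norm_num at h ⊢; exact h
        exact hq.dvd_of_dvd_pow this
      have hcast : ((16 * a' : ℤ) : K) = ((16 : ℤ) : K) * ((a' : ℤ) : K) := by push_cast; ring
      calc (Valued.v b) ^ 2 = Valued.v (b ^ 2) := by rw [Valuation.map_pow]
      _ = v.valuation K (((16 * a' : ℤ) : K)) := by rw [hb]; exact h2'
      _ = v.valuation K ((a' : ℤ) : K) := by rw [hcast, map_mul, h16, one_mul]
    -- extract exponents
    have ha'ne : ((a' : ℤ) : K) ≠ 0 := by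
      simp only [ne_eq, Int.cast_eq_zero]
      exact hpos.ne'
    have hva'ne : v.valuation K ((a' : ℤ) : K) ≠ 0 := (Valuation.ne_zero_iff _).mpr ha'ne
    have hvbne : Valued.v b ≠ 0 := by
      intro h
      rw [h] at hvb
      exact hva'ne (by simpa using hvb.symm)
    obtain ⟨γ, hγ⟩ := wz_exp hvbne
    have hva' : v.valuation K ((a' : ℤ) : K) = ((Multiplicative.ofAdd (2 * γ) : Multiplicative ℤ)
        : WithZero (Multiplicative ℤ)) := by
      rw [← hvb, hγ, ← WithZero.coe_pow, ← ofAdd_nsmul, nsmul_eq_mul]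
      norm_num
    -- the valuation of q
    obtain ⟨c, hc⟩ := hqa'
    have hqc : ¬ q ∣ c := by
      intro h
      obtain ⟨d, hd⟩ := h
      exact hq.not_unit (hsf q (by rw [hc, hd]; exact ⟨d, by ring⟩))
    have hvq : v.valuation K ((q : ℤ) : K) = ((Multiplicative.ofAdd (2 * γ) : Multiplicative ℤ)
        : WithZero (Multiplicative ℤ)) := by
      have : v.valuation K ((a' : ℤ) : K) = v.valuation K ((q : ℤ) : K) * v.valuation K ((c : ℤ) : K) := by
        rw [← map_mul]
        congr 1
        rw [hc]; push_cast; ring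
      rw [hva', hval1 c hqc, mul_one] at this
      exact this.symm
    -- all nonzero integers have even valuation
    have heven : ∀ n : ℤ, n ≠ 0 → ∃ m : ℤ, v.valuation K ((n : ℤ) : K)
        = ((Multiplicative.ofAdd (2 * m) : Multiplicative ℤ) : WithZero (Multiplicative ℤ)) := by
      intro n
      induction n using UniqueFactorizationMonoid.induction_on_prime with
      | h₁ => intro h; exact absurd rfl h
      | h₂ x hx =>
        intro _
        refine ⟨0, ?_⟩
        rcases Int.isUnit_iff.mp hx with h' | h' <;> subst h' <;> simp
      | h₃ n p hn hp ih =>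
        intro _
        obtain ⟨m, hm⟩ := ih hn
        by_cases hqp : q ∣ p
        · have hval_p : v.valuation K ((p : ℤ) : K) = ((Multiplicative.ofAdd (2 * γ)
              : Multiplicative ℤ) : WithZero (Multiplicative ℤ)) := by
            rcases Int.associated_iff.mp (hq.associated_of_dvd hp hqp) with h' | h'
            · rw [← h']; exact hvq
            · rw [← neg_neg p, ← h']
              push_cast
              rw [Valuation.map_neg]
              exact hvq
          refine ⟨γ + m, ?_⟩
          push_cast
          rw [map_mul, hval_p, hm, ← WithZero.coe_mul, ← ofAdd_add]
          congr 2
          ring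
        · refine ⟨m, ?_⟩
          push_cast
          rw [map_mul, hval1 p hqp, hm, one_mul]
    -- all nonzero rationals have even valuation
    have hevenQ : ∀ x : ℚ, x ≠ 0 → ∃ m : ℤ, v.valuation K ((x : K))
        = ((Multiplicative.ofAdd (2 * m) : Multiplicative ℤ) : WithZero (Multiplicative ℤ)) := by
      intro x hx
      have hnum : (x.num : ℚ) ≠ 0 := Int.cast_ne_zero.mpr (Rat.num_ne_zero.mpr hx)
      have hden : ((x.den : ℤ) : ℚ) ≠ 0 := by
        simp [x.den_nz]
      obtain ⟨m1, hm1⟩ := heven x.num (Rat.num_ne_zero.mpr hx)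
      obtain ⟨m2, hm2⟩ := heven (x.den : ℤ) (by exact_mod_cast x.den_nz)
      refine ⟨m1 - m2, ?_⟩
      have hxK : (x : K) = ((x.num : ℤ) : K) / (((x.den : ℤ) : ℤ) : K) := by
        push_cast
        rw [Rat.cast_def]
      rw [hxK, map_div₀, hm1, hm2, ← WithZero.coe_div, ← ofAdd_sub]
      congr 2
      ring
    -- valuation of s is 1
    have hsne : s ≠ 0 := by
      intro h
      rw [h] at hs
      norm_num at hs
    have hvs : v.valuation K s = 1 := by
      obtain ⟨m, hm⟩ := wz_exp ((Valuation.ne_zero_iff _).mpr hsne)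
      have h3v : v.valuation K (s ^ 2) = 1 := by
        rw [hs, show (-3 : K) = -((3 : ℤ) : K) by push_cast; ring, Valuation.map_neg]
        exact hval1 3 hq3
      rw [Valuation.map_pow, hm, ← WithZero.coe_pow, ← ofAdd_nsmul, nsmul_eq_mul] at h3v
      have h0 : ((2 : ℕ) : ℤ) * m = 0 := by
        have h' : ((Multiplicative.ofAdd (((2 : ℕ) : ℤ) * m) : Multiplicative ℤ)
            : WithZero (Multiplicative ℤ)) = ((1 : Multiplicative ℤ) : WithZero (Multiplicative ℤ)) := by
          rw [h3v]; simp
        exact ofAdd_eq_one.mp (WithZero.coe_inj.mp h')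
      have hm0 : m = 0 := by omega
      rw [hm, hm0]
      simp
    -- a uniformizer
    obtain ⟨π, hπ⟩ := v.valuation_exists_uniformizer K
    change _ = ((Multiplicative.ofAdd (-1 : ℤ) : Multiplicative ℤ) : WithZero (Multiplicative ℤ)) at hπ
    have hπne : π ≠ 0 := by
      intro h
      rw [h, Valuation.map_zero] at hπ
      exact WithZero.zero_ne_coe hπ
    -- write π = y * s + x with x y : ℚ
    obtain ⟨x, y, hxy⟩ : ∃ x y : ℚ, π = (y : K) * s + (x : K) := by
      have hπmem : π ∈ Algebra.adjoin ℚ {s} := hgen ▸ Algebra.mem_top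
      rw [Algebra.adjoin_singleton_eq_range_aeval] at hπmem
      obtain ⟨p, hp'⟩ := hπmem
      have hp : Polynomial.aeval s p = π := hp'
      have hmonic : (X ^ 2 + C (3 : ℚ)).Monic := by
        apply Polynomial.monic_X_pow_add_C
        norm_num
      set r := p %ₘ (X ^ 2 + C (3 : ℚ)) with hrdef
      have hdeg : r.natDegree ≤ 1 := by
        have h1 : r.degree < (X ^ 2 + C (3 : ℚ)).degree := Polynomial.degree_modByMonic_lt p hmonic
        have h2' : (X ^ 2 + C (3 : ℚ)).degree = 2 := by
          rw [Polynomial.degree_X_pow_add_C (by norm_num)]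
          rfl
        rw [h2'] at h1
        by_cases hr0 : r = 0
        · simp [hr0]
        · have h3' : r.natDegree < 2 := by
            rw [Polynomial.natDegree_lt_iff_degree_lt hr0]
            exact_mod_cast h1
          omega
      have haeval : Polynomial.aeval s r = π := by
        conv_rhs => rw [← hp, ← Polynomial.modByMonic_add_div p (X ^ 2 + C (3 : ℚ))]
        rw [map_add, map_mul, ← hrdef]
        have h0 : Polynomial.aeval s (X ^ 2 + C (3 : ℚ)) = 0 := by
          rw [map_add, Polynomial.aeval_X_pow, Polynomial.aeval_C, hs]
          norm_num
        rw [h0, zero_mul, add_zero]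
      refine ⟨r.coeff 0, r.coeff 1, ?_⟩
      rw [← haeval]
      conv_lhs => rw [Polynomial.eq_X_add_C_of_natDegree_le_one hdeg]
      rw [map_add, map_mul, Polynomial.aeval_X, Polynomial.aeval_C, Polynomial.aeval_C]
      simp [Algebra.smul_def]
    -- final contradiction
    have hv2 : v.valuation K (2 : K) = 1 := by
      have h' := hval1 2 hq2
      have : ((2 : ℤ) : K) = (2 : K) := by push_cast; ring
      rwa [this] at h'
    by_cases hy : y = 0
    · have hx : x ≠ 0 := by
        intro hx0
        rw [hy, hx0] at hxy
        simp at hxy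
        exact hπne hxy
      obtain ⟨m, hm⟩ := hevenQ x hx
      have : v.valuation K π = ((Multiplicative.ofAdd (2 * m) : Multiplicative ℤ)
          : WithZero (Multiplicative ℤ)) := by
        rw [hxy, hy]
        simpa using hm
      have := wz_ofAdd_inj ((hπ.symm.trans this))
      omega
    by_cases hx : x = 0
    · obtain ⟨m, hm⟩ := hevenQ y hy
      have : v.valuation K π = ((Multiplicative.ofAdd (2 * m) : Multiplicative ℤ)
          : WithZero (Multiplicative ℤ)) := by
        rw [hxy, hx]
        simp only [Rat.cast_zero, add_zero, map_mul, hvs, mul_one]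
        exact hm
      have := wz_ofAdd_inj ((hπ.symm.trans this))
      omega
    -- both coefficients nonzero
    obtain ⟨m1, hm1⟩ := hevenQ x hx
    obtain ⟨m2, hm2⟩ := hevenQ y hy
    have hvys : v.valuation K ((y : K) * s) = ((Multiplicative.ofAdd (2 * m2) : Multiplicative ℤ)
        : WithZero (Multiplicative ℤ)) := by
      rw [map_mul, hvs, mul_one]
      exact hm2
    have hmeq : m1 = m2 := by
      rcases lt_trichotomy (v.valuation K ((x : K))) (v.valuation K ((y : K) * s)) with hlt | heq | hgt
      · have h' := Valuation.map_add_eq_of_lt_left _ hlt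
        rw [← hxy, hvys] at h'
        rw [h'] at hπ
        have := wz_ofAdd_inj hπ.symm
        omega
      · rw [hm1, hvys] at heq
        have := wz_ofAdd_inj heq
        omega
      · have h' := Valuation.map_add_eq_of_lt_right _ hgt
        rw [← hxy, hm1] at h'
        rw [h'] at hπ
        have := wz_ofAdd_inj hπ.symm
        omega
    subst hmeq
    -- -1 ≤ 2 * m1
    have hle : (0 : ℤ) ≤ m1 := by
      have h' : v.valuation K π ≤ max (v.valuation K ((y : K) * s)) (v.valuation K ((x : K))) := by
        rw [hxy]
        exact Valuation.map_add _ _ _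
      rw [hπ, hvys, hm1, max_self] at h'
      have := (Multiplicative.ofAdd_le).mp (WithZero.coe_le_coe.mp h')
      omega
    -- valuation of the conjugate
    have hσ : v.valuation K ((x : K) - (y : K) * s) = ((Multiplicative.ofAdd (2 * m1)
        : Multiplicative ℤ) : WithZero (Multiplicative ℤ)) := by
      have hrw : (x : K) - (y : K) * s = (2 : K) * (x : K) + (-π) := by
        rw [hxy]; ring
      have hv2x : v.valuation K ((2 : K) * (x : K)) = ((Multiplicative.ofAdd (2 * m1)
          : Multiplicative ℤ) : WithZero (Multiplicative ℤ)) := by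
        rw [map_mul, hv2, one_mul]
        exact hm1
      have hlt : v.valuation K (-π) < v.valuation K ((2 : K) * (x : K)) := by
        rw [Valuation.map_neg, hπ, hv2x]
        rw [WithZero.coe_lt_coe]
        rw [Multiplicative.ofAdd_lt]
        omega
      rw [hrw, Valuation.map_add_eq_of_lt_left _ hlt]
      exact hv2x
    -- the product is rational with odd valuation
    have hprodrat : π * ((x : K) - (y : K) * s) = (((x ^ 2 + 3 * y ^ 2 : ℚ)) : K) := by
      have h1 : π * ((x : K) - (y : K) * s) = (x : K) ^ 2 - (y : K) ^ 2 * s ^ 2 := by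
        rw [hxy]; ring
      rw [h1, hs]
      push_cast
      ring
    have hprodne : (x ^ 2 + 3 * y ^ 2 : ℚ) ≠ 0 := by positivity
    obtain ⟨k, hk⟩ := hevenQ _ hprodne
    have hfin : v.valuation K (π * ((x : K) - (y : K) * s))
        = ((Multiplicative.ofAdd (2 * m1 + -1) : Multiplicative ℤ)
          : WithZero (Multiplicative ℤ)) := by
      rw [map_mul, hπ, hσ, ← WithZero.coe_mul, ← ofAdd_add]
      congr 2
      ring
    rw [hprodrat, hk] at hfin
    have := wz_ofAdd_inj hfin
    omega
  · -- `a'` is a unit at `v`; then `v(4a) = v(2)^6` so `6 ∣ v(4a)`.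
    right
    have h2K : ((2 : ℤ) : K) ≠ 0 := by norm_num
    have hv2 : v.valuation K ((2 : ℤ) : K) ≠ 0 := (Valuation.ne_zero_iff _).mpr h2K
    obtain ⟨m, hm⟩ := wz_exp hv2
    refine ⟨m, ?_⟩
    have hval : v.valuation K ((a' : ℤ) : K) = 1 := val_int_eq_one v hmem
    have hcast : ((4 * (16 * a') : ℤ) : K) = ((2 : ℤ) : K) ^ 6 * ((a' : ℤ) : K) := by
      push_cast; ring
    rw [hcast, map_mul, map_pow, hval, mul_one, hm, ← WithZero.coe_pow, ← ofAdd_nsmul,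
      nsmul_eq_mul]
    norm_num
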